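/- Let X be a subshift over an alphabet 𝒜 and let a ∈ 𝒜. Then the map φ̂_a : O_{F_a} → O_{Z_a} defined by φ̂_a(η) = {A ∈ 𝒰 : r(A,a) ∈ η} is a well-defined homeomorphism of O_{F_a} onto O_{Z_a}, with inverse φ̂_{a⁻¹} : O_{Z_a} → O_{F_a} given by φ̂_{a⁻¹}(ξ) = {B ∈ 𝒰 : r(A,a) ⊆ B for some A ∈ ξ}. -/
import Mathlib


open Set

section Subshift

variable {A : Type*}

/-- The word `w` occurs as a block of `x` at position `i`. -/
def IsBlockAt (x : ℕ → A) (w : List A) (i : ℕ) : Prop :=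
  ∀ j, ∀ _ : j < w.length, x (i + j) = w[j]

/-- The subshift `X_F ⊆ 𝒜^ℕ` determined by the set `F` of forbidden words. -/
def SubshiftOf (F : Set (List A)) : Set (ℕ → A) :=
  {x | ∀ w ∈ F, ∀ i, ¬ IsBlockAt x w i}

/-- The language of the subshift: all finite words occurring in some element of `X_F`. -/
def Lang (F : Set (List A)) : Set (List A) :=
  {w | ∃ x ∈ SubshiftOf F, ∃ i, IsBlockAt x w i}

/-- Concatenation of a finite word with an infinite sequence. -/
def wcat (w : List A) (x : ℕ → A) : ℕ → A := fun n =>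
  if h : n < w.length then w[n] else x (n - w.length)

/-- `C(α,β) = {β x ∈ X : α x ∈ X}`. -/
def Cset (F : Set (List A)) (α β : List A) : Set (ℕ → A) :=
  {y | ∃ x : ℕ → A, y = wcat β x ∧ wcat β x ∈ SubshiftOf F ∧ wcat α x ∈ SubshiftOf F}

/-- The cylinder set `Z_β = C(ω,β)`. -/
def Zcyl (F : Set (List A)) (β : List A) : Set (ℕ → A) := Cset F [] β

/-- The follower set `F_α = C(α,ω)`. -/
def Fol (F : Set (List A)) (α : List A) : Set (ℕ → A) := Cset F α []

/-- The relative range `r(S,w) = {x ∈ X : w x ∈ S}`. -/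
def relRange (F : Set (List A)) (S : Set (ℕ → A)) (w : List A) : Set (ℕ → A) :=
  {x | x ∈ SubshiftOf F ∧ wcat w x ∈ S}

/-- Membership in the Boolean algebra `𝒰` of subsets of `X` generated by the sets
`C(α,β)`, `α, β ∈ L_X`: closed under finite unions, finite intersections and
complements in `X`. -/
inductive InU (F : Set (List A)) : Set (ℕ → A) → Prop
  | base {α β : List A} (hα : α ∈ Lang F) (hβ : β ∈ Lang F) : InU F (Cset F α β)
  | union {S T : Set (ℕ → A)} : InU F S → InU F T → InU F (S ∪ T)
  | inter {S T : Set (ℕ → A)} : InU F S → InU F T → InU F (S ∩ T)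
  | compl {S : Set (ℕ → A)} : InU F S → InU F (SubshiftOf F \ S)

/-- `αβ⁻¹` is in reduced form in the free group on the alphabet:
`α` and `β` do not end in the same letter. -/
def ReducedPair (α β : List A) : Prop :=
  ¬ ∃ c : A, α.getLast? = some c ∧ β.getLast? = some c

/-- Ultrafilters (= prime filters) of the Boolean algebra `𝒰`. -/
structure UltraU (F : Set (List A)) where
  sets : Set (Set (ℕ → A))
  mem_inU : ∀ S ∈ sets, InU F S
  nonempty : sets.Nonempty
  empty_not_mem : ∅ ∉ sets
  inter_mem : ∀ S ∈ sets, ∀ T ∈ sets, S ∩ T ∈ sets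
  superset_mem : ∀ S ∈ sets, ∀ T : Set (ℕ → A), InU F T → S ⊆ T → T ∈ sets
  prime : ∀ S T : Set (ℕ → A), InU F S → InU F T → S ∪ T ∈ sets → S ∈ sets ∨ T ∈ sets

/-- The basic (compact) open set `O_S = {ξ ∈ 𝒰̂ : S ∈ ξ}` of the Stone dual `𝒰̂`. -/
def Oset (F : Set (List A)) (S : Set (ℕ → A)) : Set (UltraU F) := {ξ | S ∈ ξ.sets}

/-- The Stone topology on `𝒰̂`. -/
instance (F : Set (List A)) : TopologicalSpace (UltraU F) :=
  TopologicalSpace.generateFrom {V | ∃ S : Set (ℕ → A), InU F S ∧ V = Oset F S}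

/-- The graph of the partially defined map `σ̂` on `𝒰̂`:
`sigmaHatRel F ξ η` holds iff `ξ ∈ dom σ̂` and `η = σ̂(ξ)`. -/
def sigmaHatRel (F : Set (List A)) (ξ η : UltraU F) : Prop :=
  ∃ a : A, Zcyl F [a] ∈ ξ.sets ∧
    η.sets = {B : Set (ℕ → A) | InU F B ∧ ∃ S ∈ ξ.sets, relRange F S [a] ⊆ B}

/- The OTW subshift, modelled inside `ℕ → Option A`; a finite word corresponds to a
sequence that is eventually `none` (`none` playing the role of the symbol `∞`). -/

/-- The shift map, deleting the first letter (it sends sequences of length `≤ 1`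
to the empty sequence). -/
def shiftO (y : ℕ → Option A) : ℕ → Option A := fun i => y (i + 1)

/-- An infinite sequence, as an element of the OTW model. -/
def ofSeq (x : ℕ → A) : ℕ → Option A := fun i => some (x i)

/-- A finite word, as an element of the OTW model. -/
def ofWord (w : List A) : ℕ → Option A := fun i =>
  if h : i < w.length then some w[i] else none

/-- Concatenation of a finite word with an element of the OTW model. -/
def wcatO (w : List A) (y : ℕ → Option A) : ℕ → Option A := fun n =>
  if h : n < w.length then some w[n] else y (n - w.length)

/-- The finite words belonging to `X^fin`: those `w` for which there are infinitely many
letters `a` such that `w a y ∈ X^inf` for some `y`. -/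
def XFin (F : Set (List A)) : Set (List A) :=
  {w | {a : A | ∃ y : ℕ → A, wcat (w ++ [a]) y ∈ SubshiftOf F}.Infinite}

/-- The OTW subshift `X^OTW = X^inf ∪ X^fin`. -/
def OTW (F : Set (List A)) : Set (ℕ → Option A) :=
  ofSeq '' SubshiftOf F ∪ ofWord '' XFin F

theorem ofSeq_mem_OTW {F : Set (List A)} {x : ℕ → A} (hx : x ∈ SubshiftOf F) :
    ofSeq x ∈ OTW F := Or.inl ⟨x, hx, rfl⟩

theorem ofWord_mem_OTW {F : Set (List A)} {w : List A} (hw : w ∈ XFin F) :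
    ofWord w ∈ OTW F := Or.inr ⟨w, hw, rfl⟩

/-- The generalised cylinder `𝒵(w,F') = {y ∈ X^OTW : y` begins with `w`, and the next
letter of `y` is not in `F'}`. -/
def genCyl (F : Set (List A)) (w : List A) (F' : Set A) : Set (ℕ → Option A) :=
  {y | y ∈ OTW F ∧ (∀ j, ∀ _ : j < w.length, y j = some w[j]) ∧
    ∀ a ∈ F', y w.length ≠ some a}

/-- The follower set `ℱ(w) = {y ∈ X^OTW : w y ∈ X^OTW}` in the OTW subshift. -/
def folO (F : Set (List A)) (w : List A) : Set (ℕ → Option A) :=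
  {y | y ∈ OTW F ∧ wcatO w y ∈ OTW F}

/-- The topology on `X^OTW`, generated by the generalised cylinders. -/
instance (F : Set (List A)) : TopologicalSpace ↥(OTW F) :=
  TopologicalSpace.generateFrom
    {V | ∃ w ∈ Lang F, ∃ F' : Set A, F'.Finite ∧
      V = {y : ↥(OTW F) | (y : ℕ → Option A) ∈ genCyl F w F'}}

/-- The graph of the map `π : 𝒰̂ → X^OTW`: `piRel F ξ y` holds iff `π(ξ) = y`.
(`y` begins with a nonempty word `w` iff `Z_w ∈ ξ`.) -/
def piRel (F : Set (List A)) (ξ : UltraU F) (y : ℕ → Option A) : Prop :=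
  (∀ i, y i = none → y (i + 1) = none) ∧
  ∀ w : List A, w ≠ [] →
    ((∀ j, ∀ _ : j < w.length, y j = some w[j]) ↔ Zcyl F w ∈ ξ.sets)

end Subshift

section Conjugacy

variable {A₁ A₂ : Type*}

/-- `h` commutes with the shift maps. -/
def ShiftCommuting (F₁ : Set (List A₁)) (F₂ : Set (List A₂))
    (h : ↥(OTW F₁) → ↥(OTW F₂)) : Prop :=
  ∀ (y : ↥(OTW F₁)) (hy : shiftO (y : ℕ → Option A₁) ∈ OTW F₁),
    (h ⟨shiftO (y : ℕ → Option A₁), hy⟩ : ℕ → Option A₂) =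
      shiftO ((h y : ℕ → Option A₂))

/-- `h` is length-preserving: `h y` and `y` have the same length, i.e. the same
positions where the symbol `∞` (here `none`) occurs. -/
def LengthPreserving (F₁ : Set (List A₁)) (F₂ : Set (List A₂))
    (h : ↥(OTW F₁) → ↥(OTW F₂)) : Prop :=
  ∀ (y : ↥(OTW F₁)) (i : ℕ),
    ((h y : ℕ → Option A₂) i = none ↔ (y : ℕ → Option A₁) i = none)

/-- A conjugacy of OTW subshifts: a homeomorphism commuting with the shifts and
preserving lengths. -/
def IsConjugacy (F₁ : Set (List A₁)) (F₂ : Set (List A₂))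
    (h : ↥(OTW F₁) ≃ₜ ↥(OTW F₂)) : Prop :=
  ShiftCommuting F₁ F₂ ⇑h ∧ LengthPreserving F₁ F₂ ⇑h

/-- The image `h̄(S) = h(S)` of a subset `S ⊆ X₁` under (the restriction to `X₁` of)
a map `h : X₁^OTW → X₂^OTW`. -/
def hbar (F₁ : Set (List A₁)) (F₂ : Set (List A₂))
    (h : ↥(OTW F₁) → ↥(OTW F₂)) (S : Set (ℕ → A₁)) : Set (ℕ → A₂) :=
  {z | ∃ y : ↥(OTW F₁), (y : ℕ → Option A₁) ∈ ofSeq '' S ∧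
    ofSeq z = (h y : ℕ → Option A₂)}

end Conjugacy

section PhiAux

variable {A : Type*} {F : Set (List A)} {a b : A}

theorem wcat_nil (x : ℕ → A) : wcat ([] : List A) x = x := by
  funext n; simp [wcat]

theorem wcat_lt (w : List A) (x : ℕ → A) {n : ℕ} (h : n < w.length) :
    wcat w x n = w[n] := dif_pos h

theorem wcat_ge (w : List A) (x : ℕ → A) {n : ℕ} (h : ¬ n < w.length) :
    wcat w x n = x (n - w.length) := dif_neg h

theorem wcat_append (u v : List A) (x : ℕ → A) :
    wcat (u ++ v) x = wcat u (wcat v x) := by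
  funext n
  by_cases h1 : n < u.length
  · rw [wcat_lt _ _ h1, wcat_lt _ _ (by simp; omega),
      List.getElem_append_left h1]
  · rw [wcat_ge _ _ h1]
    by_cases h2 : n < u.length + v.length
    · rw [wcat_lt _ _ (by simp; omega), wcat_lt _ _ (by omega),
        List.getElem_append_right (le_of_not_gt h1)]
    · rw [wcat_ge _ _ (by simp; omega), wcat_ge _ _ (by omega)]
      congr 1; simp; omega

theorem wcat_right_cancel {w : List A} {x y : ℕ → A} (h : wcat w x = wcat w y) :
    x = y := by
  funext n
  have h2 := congrFun h (n + w.length)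
  rwa [wcat_ge _ _ (by omega), wcat_ge _ _ (by omega), Nat.add_sub_cancel] at h2

theorem tail_mem_subshift {w : List A} {x : ℕ → A} (h : wcat w x ∈ SubshiftOf F) :
    x ∈ SubshiftOf F := by
  intro u hu i hblk
  refine h u hu (w.length + i) fun j hj => ?_
  rw [wcat_ge _ _ (by omega)]
  have h2 := hblk j hj
  rw [← h2]; congr 1; omega

theorem wcat_word_mem_Lang {w : List A} {x : ℕ → A} (h : wcat w x ∈ SubshiftOf F) :
    w ∈ Lang F :=
  ⟨wcat w x, h, 0, fun j hj => by rw [Nat.zero_add, wcat_lt _ _ hj]⟩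

theorem nil_mem_Lang {w : List A} (hw : w ∈ Lang F) : ([] : List A) ∈ Lang F := by
  obtain ⟨x, hx, -⟩ := hw
  exact ⟨x, hx, 0, fun j hj => by simp at hj⟩

theorem tail_mem_Lang {w : List A} (h : (b :: w) ∈ Lang F) : w ∈ Lang F := by
  obtain ⟨x, hx, i, hblk⟩ := h
  refine ⟨x, hx, i + 1, fun j hj => ?_⟩
  have h2 := hblk (j + 1) (by simpa using Nat.succ_lt_succ hj)
  rw [show i + 1 + j = i + (j + 1) by omega, h2, List.getElem_cons_succ]

theorem Fol_eq (w : List A) :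
    Fol F w = {x | x ∈ SubshiftOf F ∧ wcat w x ∈ SubshiftOf F} := by
  ext y
  constructor
  · rintro ⟨x, rfl, hx, hax⟩
    rw [wcat_nil] at hx ⊢
    exact ⟨hx, hax⟩
  · rintro ⟨hy, hay⟩
    exact ⟨y, (wcat_nil y).symm, by rwa [wcat_nil], hay⟩

theorem mem_Zcyl {w : List A} {y : ℕ → A} :
    y ∈ Zcyl F w ↔ ∃ x, y = wcat w x ∧ wcat w x ∈ SubshiftOf F := by
  constructor
  · rintro ⟨x, rfl, hx, -⟩; exact ⟨x, rfl, hx⟩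
  · rintro ⟨x, rfl, hx⟩
    exact ⟨x, rfl, hx, by rw [wcat_nil]; exact tail_mem_subshift hx⟩

theorem Cset_nil_nil : Cset F [] [] = SubshiftOf F := by
  ext y
  constructor
  · rintro ⟨x, rfl, hx, -⟩; rwa [wcat_nil]
  · intro hy; exact ⟨y, (wcat_nil y).symm, by rwa [wcat_nil], by rwa [wcat_nil]⟩

theorem InU_X (h : ([] : List A) ∈ Lang F) : InU F (SubshiftOf F) :=
  Cset_nil_nil ▸ InU.base h h

theorem InU_empty (h : ([] : List A) ∈ Lang F) : InU F (∅ : Set (ℕ → A)) := by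
  have h2 := InU.compl (InU_X h)
  simpa using h2

theorem InU_subset {S : Set (ℕ → A)} (h : InU F S) : S ⊆ SubshiftOf F := by
  induction h with
  | base hα hβ => rintro y ⟨x, rfl, hx, -⟩; exact hx
  | union _ _ ih1 ih2 => exact Set.union_subset ih1 ih2
  | inter _ _ ih1 ih2 => exact Set.Subset.trans Set.inter_subset_left ih1
  | compl _ _ => exact Set.diff_subset

theorem relRange_mono {S T : Set (ℕ → A)} {w : List A} (h : S ⊆ T) :
    relRange F S w ⊆ relRange F T w := fun x hx => ⟨hx.1, h hx.2⟩

theorem relRange_empty (w : List A) : relRange F (∅ : Set (ℕ → A)) w = ∅ := by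
  ext x; simp [relRange]

theorem relRange_inter (S T : Set (ℕ → A)) (w : List A) :
    relRange F (S ∩ T) w = relRange F S w ∩ relRange F T w := by
  ext x; simp only [relRange, Set.mem_inter_iff, Set.mem_setOf_eq]; tauto

theorem relRange_union (S T : Set (ℕ → A)) (w : List A) :
    relRange F (S ∪ T) w = relRange F S w ∪ relRange F T w := by
  ext x; simp only [relRange, Set.mem_union, Set.mem_setOf_eq]; tauto

theorem relRange_X (w : List A) :
    relRange F (SubshiftOf F) w = Fol F w := by
  rw [Fol_eq]; rfl

theorem relRange_compl (S : Set (ℕ → A)) (w : List A) :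
    relRange F (SubshiftOf F \ S) w
      = Fol F w ∩ (SubshiftOf F \ relRange F S w) := by
  rw [Fol_eq]
  ext x
  simp only [relRange, Set.mem_inter_iff, Set.mem_diff, Set.mem_setOf_eq]
  tauto

theorem relRange_Cset_nil (α : List A) :
    relRange F (Cset F α []) [a] = Cset F (α ++ [a]) [] := by
  ext x
  constructor
  · rintro ⟨hx, x', hx'eq, hx', hax'⟩
    rw [wcat_nil] at hx'eq hx'
    refine ⟨x, (wcat_nil x).symm, by rwa [wcat_nil], ?_⟩
    rw [wcat_append, hx'eq]
    exact hax'
  · rintro ⟨x', rfl, hx', hax'⟩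
    rw [wcat_nil] at hx' ⊢
    rw [wcat_append] at hax'
    exact ⟨hx', wcat [a] x', (wcat_nil _).symm, by rw [wcat_nil]; exact tail_mem_subshift hax', hax'⟩

theorem relRange_Cset_cons_ne (α β : List A) (hba : b ≠ a) :
    relRange F (Cset F α (b :: β)) [a] = ∅ := by
  ext x
  simp only [Set.mem_empty_iff_false, iff_false]
  rintro ⟨hx, x', hx'eq, -, -⟩
  have h0 := congrFun hx'eq 0
  rw [wcat_lt _ _ (by simp), wcat_lt _ _ (by simp)] at h0
  exact hba (by simpa using h0.symm)

theorem relRange_Cset_cons (α β : List A) :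
    relRange F (Cset F α (a :: β)) [a] = Cset F α β ∩ Cset F (a :: β) β := by
  have hcons : ∀ x' : ℕ → A, wcat (a :: β) x' = wcat [a] (wcat β x') := fun x' => by
    rw [← wcat_append]; rfl
  ext x
  constructor
  · rintro ⟨hx, x', hx'eq, hx', hax'⟩
    rw [hcons] at hx'eq hx'
    have hxeq : x = wcat β x' := wcat_right_cancel hx'eq
    subst hxeq
    exact ⟨⟨x', rfl, hx, hax'⟩, ⟨x', rfl, hx, by rw [hcons]; exact hx'⟩⟩
  · rintro ⟨⟨x', rfl, hx', hax'⟩, ⟨x'', hx''eq, -, habx''⟩⟩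
    have hxx : x'' = x' := (wcat_right_cancel hx''eq.symm)
    subst hxx
    exact ⟨hx', x'', (hcons x'').symm, habx'', hax'⟩

/-- `âS = {a·x : x ∈ S, a·x ∈ X}`. -/
def aext (F : Set (List A)) (a : A) (S : Set (ℕ → A)) : Set (ℕ → A) :=
  {y | ∃ x ∈ S, y = wcat [a] x ∧ wcat [a] x ∈ SubshiftOf F}

theorem aext_Cset (α β : List A) :
    aext F a (Cset F α β) = Cset F α (a :: β) ∩ Cset F [] (a :: β) := by
  have hcons : ∀ x' : ℕ → A, wcat (a :: β) x' = wcat [a] (wcat β x') := fun x' => by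
    rw [← wcat_append]; rfl
  ext y
  constructor
  · rintro ⟨x, ⟨x', rfl, hx', hax'⟩, rfl, haX⟩
    rw [← hcons] at haX ⊢
    exact ⟨⟨x', rfl, haX, hax'⟩,
      ⟨x', rfl, haX, by rw [wcat_nil]; exact tail_mem_subshift hx'⟩⟩
  · rintro ⟨⟨x', rfl, hX, hax'⟩, -⟩
    rw [hcons] at hX ⊢
    exact ⟨wcat β x', ⟨x', rfl, tail_mem_subshift hX, hax'⟩, rfl, hX⟩

theorem aext_union (S T : Set (ℕ → A)) :
    aext F a (S ∪ T) = aext F a S ∪ aext F a T := by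
  ext y
  simp only [aext, Set.mem_union, Set.mem_setOf_eq]
  constructor
  · rintro ⟨x, hx | hx, rfl, hX⟩
    exacts [Or.inl ⟨x, hx, rfl, hX⟩, Or.inr ⟨x, hx, rfl, hX⟩]
  · rintro (⟨x, hx, rfl, hX⟩ | ⟨x, hx, rfl, hX⟩)
    exacts [⟨x, Or.inl hx, rfl, hX⟩, ⟨x, Or.inr hx, rfl, hX⟩]

theorem aext_inter (S T : Set (ℕ → A)) :
    aext F a (S ∩ T) = aext F a S ∩ aext F a T := by
  ext y
  simp only [aext, Set.mem_inter_iff, Set.mem_setOf_eq]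
  constructor
  · rintro ⟨x, ⟨hxS, hxT⟩, rfl, hX⟩
    exact ⟨⟨x, hxS, rfl, hX⟩, ⟨x, hxT, rfl, hX⟩⟩
  · rintro ⟨⟨x, hxS, rfl, hX⟩, ⟨x', hx'T, heq, -⟩⟩
    obtain rfl := wcat_right_cancel heq
    exact ⟨x, ⟨hxS, hx'T⟩, rfl, hX⟩

theorem aext_compl (S : Set (ℕ → A)) :
    aext F a (SubshiftOf F \ S) = Zcyl F [a] ∩ (SubshiftOf F \ aext F a S) := by
  ext y
  constructor
  · rintro ⟨x, ⟨hxX, hxS⟩, rfl, hX⟩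
    refine ⟨mem_Zcyl.mpr ⟨x, rfl, hX⟩, hX, ?_⟩
    rintro ⟨x', hx'S, heq, -⟩
    exact hxS (by rwa [← wcat_right_cancel heq] at hx'S)
  · rintro ⟨hZ, hX, hnot⟩
    obtain ⟨x, rfl, hax⟩ := mem_Zcyl.mp hZ
    refine ⟨x, ⟨tail_mem_subshift hax, fun hxS => hnot ⟨x, hxS, rfl, hax⟩⟩, rfl, hax⟩

theorem InU_aext (ha : [a] ∈ Lang F) {S : Set (ℕ → A)} (hS : InU F S) :
    InU F (aext F a S) := by
  induction hS with
  | @base α β hα hβ =>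
    rw [aext_Cset]
    by_cases hab : (a :: β) ∈ Lang F
    · exact InU.inter (InU.base hα hab) (InU.base (nil_mem_Lang ha) hab)
    · have hempty : Cset F α (a :: β) ∩ Cset F [] (a :: β) = ∅ := by
        ext y
        simp only [Set.mem_inter_iff, Set.mem_empty_iff_false, iff_false, not_and]
        rintro ⟨x, rfl, hX, -⟩
        exact (hab (wcat_word_mem_Lang hX)).elim
      rw [hempty]
      exact InU_empty (nil_mem_Lang ha)
  | union _ _ ih1 ih2 => rw [aext_union]; exact InU.union ih1 ih2
  | inter _ _ ih1 ih2 => rw [aext_inter]; exact InU.inter ih1 ih2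
  | compl _ ih =>
    rw [aext_compl]
    exact InU.inter (InU.base (nil_mem_Lang ha) ha) (InU.compl ih)

theorem InU_relRange (ha : [a] ∈ Lang F) {S : Set (ℕ → A)} (hS : InU F S) :
    InU F (relRange F S [a]) := by
  induction hS with
  | @base α β hα hβ =>
    match β, hβ with
    | [], hβ =>
      rw [relRange_Cset_nil]
      by_cases haa : (α ++ [a]) ∈ Lang F
      · exact InU.base haa (nil_mem_Lang ha)
      · have hempty : Cset F (α ++ [a]) [] = ∅ := by
          ext y
          simp only [Set.mem_empty_iff_false, iff_false]
          rintro ⟨x, rfl, -, hX⟩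
          exact haa (wcat_word_mem_Lang hX)
        rw [hempty]
        exact InU_empty (nil_mem_Lang ha)
    | b :: β', hβ =>
      by_cases hba : b = a
      · subst hba
        rw [relRange_Cset_cons]
        exact InU.inter (InU.base hα (tail_mem_Lang hβ)) (InU.base hβ (tail_mem_Lang hβ))
      · rw [relRange_Cset_cons_ne _ _ hba]
        exact InU_empty (nil_mem_Lang ha)
  | union _ _ ih1 ih2 => rw [relRange_union]; exact InU.union ih1 ih2
  | inter _ _ ih1 ih2 => rw [relRange_inter]; exact InU.inter ih1 ih2
  | compl _ ih =>
    rw [relRange_compl]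
    exact InU.inter (InU.base ha (nil_mem_Lang ha)) (InU.compl ih)

theorem relRange_aext (S : Set (ℕ → A)) :
    relRange F (aext F a S) [a] = S ∩ Fol F [a] := by
  rw [Fol_eq]
  ext x
  constructor
  · rintro ⟨hxX, x', hx'S, heq, hX⟩
    obtain rfl := wcat_right_cancel heq
    exact ⟨hx'S, hxX, hX⟩
  · rintro ⟨hxS, hxX, hax⟩
    exact ⟨hxX, x, hxS, rfl, hax⟩

theorem aext_relRange (S : Set (ℕ → A)) :
    aext F a (relRange F S [a]) = S ∩ Zcyl F [a] := by
  ext y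
  constructor
  · rintro ⟨x, ⟨hxX, haxS⟩, rfl, hX⟩
    exact ⟨haxS, mem_Zcyl.mpr ⟨x, rfl, hX⟩⟩
  · rintro ⟨hyS, hZ⟩
    obtain ⟨x, rfl, hax⟩ := mem_Zcyl.mp hZ
    exact ⟨x, ⟨tail_mem_subshift hax, hyS⟩, rfl, hax⟩

theorem relRange_Zcyl : relRange F (Zcyl F [a]) [a] = Fol F [a] := by
  rw [Fol_eq]
  ext x
  constructor
  · rintro ⟨hxX, hZ⟩
    obtain ⟨x', heq, hX⟩ := mem_Zcyl.mp hZ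
    exact ⟨hxX, by rwa [← heq] at hX⟩
  · rintro ⟨hxX, hax⟩
    exact ⟨hxX, mem_Zcyl.mpr ⟨x, rfl, hax⟩⟩

theorem UltraU.ext' {u v : UltraU F} (h : u.sets = v.sets) : u = v := by
  cases u; cases v; cases h; rfl

theorem lang_of_Fol_mem {η : UltraU F} (h : Fol F [a] ∈ η.sets) : [a] ∈ Lang F := by
  have hne : Fol F [a] ≠ ∅ := fun he => η.empty_not_mem (he ▸ h)
  obtain ⟨y, hy⟩ := Set.nonempty_iff_ne_empty.mpr hne
  rw [Fol_eq] at hy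
  exact wcat_word_mem_Lang hy.2

theorem lang_of_Zcyl_mem {ξ : UltraU F} (h : Zcyl F [a] ∈ ξ.sets) : [a] ∈ Lang F := by
  have hne : Zcyl F [a] ≠ ∅ := fun he => ξ.empty_not_mem (he ▸ h)
  obtain ⟨y, hy⟩ := Set.nonempty_iff_ne_empty.mpr hne
  obtain ⟨x, rfl, hX⟩ := mem_Zcyl.mp hy
  exact wcat_word_mem_Lang hX

/-- The forward map `φ̂_a` on ultrafilters. -/
def phiU (ha : [a] ∈ Lang F) (η : UltraU F) (hη : Fol F [a] ∈ η.sets) : UltraU F where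
  sets := {S : Set (ℕ → A) | InU F S ∧ relRange F S [a] ∈ η.sets}
  mem_inU S hS := hS.1
  nonempty := ⟨SubshiftOf F, InU_X (nil_mem_Lang ha), by rw [relRange_X]; exact hη⟩
  empty_not_mem h := η.empty_not_mem (by have h2 := h.2; rwa [relRange_empty] at h2)
  inter_mem S hS T hT :=
    ⟨InU.inter hS.1 hT.1, by rw [relRange_inter]; exact η.inter_mem _ hS.2 _ hT.2⟩
  superset_mem S hS T hT hST :=
    ⟨hT, η.superset_mem _ hS.2 _ (InU_relRange ha hT) (relRange_mono hST)⟩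
  prime S T hS hT hST := by
    rcases η.prime _ _ (InU_relRange ha hS) (InU_relRange ha hT)
        (by rw [← relRange_union]; exact hST.2) with h | h
    exacts [Or.inl ⟨hS, h⟩, Or.inr ⟨hT, h⟩]

theorem phiU_mem_Zcyl (ha : [a] ∈ Lang F) (η : UltraU F) (hη : Fol F [a] ∈ η.sets) :
    Zcyl F [a] ∈ (phiU ha η hη).sets :=
  ⟨InU.base (nil_mem_Lang ha) ha, by rw [relRange_Zcyl]; exact hη⟩

/-- The inverse map `φ̂_{a⁻¹}` on ultrafilters. -/
def psiU (ha : [a] ∈ Lang F) (ξ : UltraU F) (hξ : Zcyl F [a] ∈ ξ.sets) : UltraU F where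
  sets := {B : Set (ℕ → A) | InU F B ∧ ∃ S ∈ ξ.sets, relRange F S [a] ⊆ B}
  mem_inU B hB := hB.1
  nonempty := by
    obtain ⟨S, hS⟩ := ξ.nonempty
    exact ⟨SubshiftOf F, InU_X (nil_mem_Lang ha), S, hS, fun x hx => hx.1⟩
  empty_not_mem := by
    rintro ⟨-, S, hS, hsub⟩
    have hSZ : S ∩ Zcyl F [a] ∈ ξ.sets := ξ.inter_mem _ hS _ hξ
    have hne : S ∩ Zcyl F [a] ≠ ∅ := fun he => ξ.empty_not_mem (he ▸ hSZ)
    obtain ⟨y, hyS, hyZ⟩ := Set.nonempty_iff_ne_empty.mpr hne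
    obtain ⟨x, rfl, hX⟩ := mem_Zcyl.mp hyZ
    exact hsub ⟨tail_mem_subshift hX, hyS⟩
  inter_mem B hB B' hB' :=
    ⟨InU.inter hB.1 hB'.1, by
      obtain ⟨S, hS, hsub⟩ := hB.2
      obtain ⟨S', hS', hsub'⟩ := hB'.2
      exact ⟨S ∩ S', ξ.inter_mem _ hS _ hS', by
        rw [relRange_inter]; exact Set.inter_subset_inter hsub hsub'⟩⟩
  superset_mem B hB T hT hBT :=
    ⟨hT, by
      obtain ⟨S, hS, hsub⟩ := hB.2
      exact ⟨S, hS, hsub.trans hBT⟩⟩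
  prime B B' hB hB' hmem := by
    obtain ⟨-, S, hS, hsub⟩ := hmem
    have hsub2 : S ∩ Zcyl F [a] ⊆ aext F a B ∪ aext F a B' := by
      rintro y ⟨hyS, hyZ⟩
      obtain ⟨x, rfl, hX⟩ := mem_Zcyl.mp hyZ
      rcases hsub ⟨tail_mem_subshift hX, hyS⟩ with h | h
      exacts [Or.inl ⟨x, h, rfl, hX⟩, Or.inr ⟨x, h, rfl, hX⟩]
    have hU : aext F a B ∪ aext F a B' ∈ ξ.sets :=
      ξ.superset_mem _ (ξ.inter_mem _ hS _ hξ) _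
        (InU.union (InU_aext ha hB) (InU_aext ha hB')) hsub2
    rcases ξ.prime _ _ (InU_aext ha hB) (InU_aext ha hB') hU with h | h
    · exact Or.inl ⟨hB, aext F a B, h, by rw [relRange_aext]; exact Set.inter_subset_left⟩
    · exact Or.inr ⟨hB', aext F a B', h, by rw [relRange_aext]; exact Set.inter_subset_left⟩

theorem psiU_mem_Fol (ha : [a] ∈ Lang F) (ξ : UltraU F) (hξ : Zcyl F [a] ∈ ξ.sets) :
    Fol F [a] ∈ (psiU ha ξ hξ).sets :=
  ⟨InU.base ha (nil_mem_Lang ha), Zcyl F [a], hξ, by rw [relRange_Zcyl]⟩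

theorem psi_phi (ha : [a] ∈ Lang F) (η : UltraU F) (hη : Fol F [a] ∈ η.sets)
    (hZ : Zcyl F [a] ∈ (phiU ha η hη).sets) :
    psiU ha (phiU ha η hη) hZ = η := by
  apply UltraU.ext'
  ext B
  constructor
  · rintro ⟨hB, S, ⟨hSInU, hrS⟩, hsub⟩
    exact η.superset_mem _ hrS _ hB hsub
  · intro hBη
    refine ⟨η.mem_inU B hBη, aext F a B,
      ⟨InU_aext ha (η.mem_inU B hBη), ?_⟩, ?_⟩
    · rw [relRange_aext]; exact η.inter_mem _ hBη _ hη
    · rw [relRange_aext]; exact Set.inter_subset_left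

theorem phi_psi (ha : [a] ∈ Lang F) (ξ : UltraU F) (hξ : Zcyl F [a] ∈ ξ.sets)
    (hF : Fol F [a] ∈ (psiU ha ξ hξ).sets) :
    phiU ha (psiU ha ξ hξ) hF = ξ := by
  apply UltraU.ext'
  ext S
  constructor
  · rintro ⟨hSInU, -, T, hT, hsub⟩
    have hsub2 : T ∩ Zcyl F [a] ⊆ S := by
      rintro y ⟨hyT, hyZ⟩
      obtain ⟨x, rfl, hX⟩ := mem_Zcyl.mp hyZ
      exact (hsub ⟨tail_mem_subshift hX, hyT⟩).2
    exact ξ.superset_mem _ (ξ.inter_mem _ hT _ hξ) _ hSInU hsub2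
  · intro hSξ
    exact ⟨ξ.mem_inU S hSξ, InU_relRange ha (ξ.mem_inU S hSξ), S, hSξ, subset_rfl⟩

theorem psiU_mem_iff (ha : [a] ∈ Lang F) (ξ : UltraU F) (hξ : Zcyl F [a] ∈ ξ.sets)
    (B : Set (ℕ → A)) :
    B ∈ (psiU ha ξ hξ).sets ↔ InU F B ∧ aext F a B ∈ ξ.sets := by
  constructor
  · rintro ⟨hB, T, hT, hsub⟩
    refine ⟨hB, ξ.superset_mem _ (ξ.inter_mem _ hT _ hξ) _ (InU_aext ha hB) ?_⟩
    rintro y ⟨hyT, hyZ⟩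
    obtain ⟨x, rfl, hX⟩ := mem_Zcyl.mp hyZ
    exact ⟨x, hsub ⟨tail_mem_subshift hX, hyT⟩, rfl, hX⟩
  · rintro ⟨hB, hmem⟩
    exact ⟨hB, aext F a B, hmem, by rw [relRange_aext]; exact Set.inter_subset_left⟩

theorem isOpen_Oset {S : Set (ℕ → A)} (hS : InU F S) : IsOpen (Oset F S) :=
  TopologicalSpace.GenerateOpen.basic _ ⟨S, hS, rfl⟩

theorem continuous_of_isEmpty {X Y : Type*} [TopologicalSpace X] [TopologicalSpace Y]
    [IsEmpty X] (f : X → Y) : Continuous f := by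
  rw [continuous_def]
  intro s _
  rw [Set.eq_empty_of_isEmpty (f ⁻¹' s)]
  exact isOpen_empty

end PhiAux

theorem phiHat_letter_homeomorphism {A : Type*} (F : Set (List A)) (a : A) :
    ∃ g : ↥(Oset F (Fol F [a])) ≃ₜ ↥(Oset F (Zcyl F [a])),
      (∀ η : ↥(Oset F (Fol F [a])),
        (↑(g η) : UltraU F).sets
          = {S : Set (ℕ → A) | InU F S ∧ relRange F S [a] ∈ (↑η : UltraU F).sets}) ∧
      ∀ ξ : ↥(Oset F (Zcyl F [a])),
        (↑(g.symm ξ) : UltraU F).sets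
          = {B : Set (ℕ → A) | InU F B ∧
              ∃ S ∈ (↑ξ : UltraU F).sets, relRange F S [a] ⊆ B} := by
  by_cases ha : [a] ∈ Lang F
  · have hc1 : Continuous (fun η : ↥(Oset F (Fol F [a])) =>
        (⟨phiU ha η.1 η.2, phiU_mem_Zcyl ha η.1 η.2⟩ : ↥(Oset F (Zcyl F [a])))) := by
      refine Continuous.subtype_mk ?_ _
      refine continuous_generateFrom_iff.mpr ?_
      rintro V ⟨S, hS, rfl⟩
      have hpre : (fun η : ↥(Oset F (Fol F [a])) => phiU ha η.1 η.2) ⁻¹' Oset F S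
          = Subtype.val ⁻¹' Oset F (relRange F S [a]) := by
        ext η
        constructor
        · exact fun h => h.2
        · exact fun h => ⟨hS, h⟩
      rw [hpre]
      exact (isOpen_Oset (InU_relRange ha hS)).preimage continuous_subtype_val
    have hc2 : Continuous (fun ξ : ↥(Oset F (Zcyl F [a])) =>
        (⟨psiU ha ξ.1 ξ.2, psiU_mem_Fol ha ξ.1 ξ.2⟩ : ↥(Oset F (Fol F [a])))) := by
      refine Continuous.subtype_mk ?_ _
      refine continuous_generateFrom_iff.mpr ?_
      rintro V ⟨S, hS, rfl⟩
      have hpre : (fun ξ : ↥(Oset F (Zcyl F [a])) => psiU ha ξ.1 ξ.2) ⁻¹' Oset F S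
          = Subtype.val ⁻¹' Oset F (aext F a S) := by
        ext ξ
        constructor
        · exact fun h => ((psiU_mem_iff ha ξ.1 ξ.2 S).mp h).2
        · exact fun h => (psiU_mem_iff ha ξ.1 ξ.2 S).mpr ⟨hS, h⟩
      rw [hpre]
      exact (isOpen_Oset (InU_aext ha hS)).preimage continuous_subtype_val
    exact ⟨{
      toFun := fun η => ⟨phiU ha η.1 η.2, phiU_mem_Zcyl ha η.1 η.2⟩
      invFun := fun ξ => ⟨psiU ha ξ.1 ξ.2, psiU_mem_Fol ha ξ.1 ξ.2⟩
      left_inv := fun η => Subtype.ext (psi_phi ha η.1 η.2 (phiU_mem_Zcyl ha η.1 η.2))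
      right_inv := fun ξ => Subtype.ext (phi_psi ha ξ.1 ξ.2 (psiU_mem_Fol ha ξ.1 ξ.2))
      continuous_toFun := hc1
      continuous_invFun := hc2 }, fun η => rfl, fun ξ => rfl⟩
  · have h1 : IsEmpty ↥(Oset F (Fol F [a])) := ⟨fun η => ha (lang_of_Fol_mem η.2)⟩
    have h2 : IsEmpty ↥(Oset F (Zcyl F [a])) := ⟨fun ξ => ha (lang_of_Zcyl_mem ξ.2)⟩
    exact ⟨⟨Equiv.equivOfIsEmpty _ _, continuous_of_isEmpty _, continuous_of_isEmpty _⟩,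
      fun η => isEmptyElim η, fun ξ => isEmptyElim ξ⟩
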